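/- Let V be a positive random variable and α > 0. If there exists C₁ > 0 such that log P(V ≤ t) ≤ -C₁ t^{-α} for all t > 0, then there exists C₂ > 0 such that log E[e^{-λ V}] ≤ -C₂ λ^{α/(1+α)} for all λ > 1. -/

import Mathlib

/-!
Splitting according to whether `V ≤ t`,
`E[e^{-λV}] ≤ P(V ≤ t) + e^{-λt} ≤ e^{-C₁ t^{-α}} + e^{-λt}`,
and `t = λ^{-1/(1+α)}` turns both exponents into `λ^{α/(1+α)}`, so that
`log E[e^{-λV}] ≤ log 2 - c λ^{α/(1+α)}`. This settles large `λ`. On the bounded range of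
`λ^{α/(1+α)}` where `log 2` dominates, monotonicity gives `E[e^{-λV}] ≤ E[e^{-V}] < 1`, a fixed
negative bound on the logarithm.
-/

open MeasureTheory ProbabilityTheory Real Set

namespace ProbabilityTheory

variable {Ω : Type*} [MeasurableSpace Ω] {μ : Measure Ω} {V : Ω → ℝ} {l l' : ℝ}

lemma integrable_exp_neg_mul [IsFiniteMeasure μ] (hVm : Measurable V) (hV : ∀ ω, 0 ≤ V ω)
    (hl : 0 ≤ l) : Integrable (fun ω ↦ exp (-l * V ω)) μ :=
  (integrable_const 1).mono' (hVm.const_mul _).exp.aestronglyMeasurable <| ae_of_all _ fun ω ↦ by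
    rw [norm_eq_abs, abs_exp, exp_le_one_iff]
    exact mul_nonpos_of_nonpos_of_nonneg (neg_nonpos.2 hl) (hV ω)

lemma mgf_neg_le_mgf_neg_of_le [IsFiniteMeasure μ] (hVm : Measurable V) (hV : ∀ ω, 0 ≤ V ω)
    (hl' : 0 ≤ l') (hll' : l' ≤ l) : mgf V μ (-l) ≤ mgf V μ (-l') :=
  integral_mono (integrable_exp_neg_mul hVm hV (hl'.trans hll')) (integrable_exp_neg_mul hVm hV hl')
    fun ω ↦ exp_le_exp.2 <| mul_le_mul_of_nonneg_right (neg_le_neg hll') (hV ω)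

lemma mgf_neg_lt_one [IsProbabilityMeasure μ] (hVm : Measurable V) (hV : ∀ ω, 0 < V ω)
    (hl : 0 < l) : mgf V μ (-l) < 1 := by
  have hlt : ∀ ω, exp (-l * V ω) < 1 := fun ω ↦
    exp_lt_one_iff.2 <| mul_neg_of_neg_of_pos (neg_neg_of_pos hl) (hV ω)
  have hint := integrable_exp_neg_mul (μ := μ) hVm (fun ω ↦ (hV ω).le) hl.le
  have hpos : 0 < ∫ ω, (1 - exp (-l * V ω)) ∂μ := by
    rw [integral_pos_iff_support_of_nonneg (fun ω ↦ sub_nonneg.2 (hlt ω).le)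
      ((integrable_const 1).sub hint),
      eq_univ_of_forall fun ω ↦ Function.mem_support.2 (sub_ne_zero.2 (hlt ω).ne')]
    simp
  rw [integral_sub (integrable_const 1) hint] at hpos
  simpa [mgf] using hpos

lemma mgf_neg_le_measureReal_add_exp [IsProbabilityMeasure μ] (hVm : Measurable V)
    (hV : ∀ ω, 0 ≤ V ω) (hl : 0 ≤ l) (t : ℝ) :
    mgf V μ (-l) ≤ μ.real {ω | V ω ≤ t} + exp (-l * t) := by
  have hs : MeasurableSet {ω | V ω ≤ t} := hVm measurableSet_Iic
  have hind : Integrable ({ω | V ω ≤ t}.indicator (1 : Ω → ℝ)) μ :=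
    (integrable_const 1).indicator hs
  have hpt : ∀ ω, exp (-l * V ω) ≤ {ω | V ω ≤ t}.indicator (1 : Ω → ℝ) ω + exp (-l * t) := by
    intro ω
    by_cases hω : ω ∈ {ω | V ω ≤ t}
    · rw [indicator_of_mem hω, Pi.one_apply]
      have : exp (-l * V ω) ≤ 1 :=
        exp_le_one_iff.2 (mul_nonpos_of_nonpos_of_nonneg (neg_nonpos.2 hl) (hV ω))
      linarith [exp_pos (-l * t)]
    · rw [indicator_of_notMem hω, zero_add]
      exact exp_le_exp.2 <| mul_le_mul_of_nonpos_left (not_le.1 hω).le (neg_nonpos.2 hl)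
  calc mgf V μ (-l) ≤ ∫ ω, ({ω | V ω ≤ t}.indicator (1 : Ω → ℝ) ω + exp (-l * t)) ∂μ :=
        integral_mono (integrable_exp_neg_mul hVm hV hl) (hind.add (integrable_const _)) hpt
    _ = μ.real {ω | V ω ≤ t} + exp (-l * t) := by
        rw [integral_add hind (integrable_const _), integral_indicator_one hs, integral_const,
          probReal_univ, one_smul]

lemma mgf_neg_le_two_mul_exp_rpow [IsProbabilityMeasure μ] (hVm : Measurable V)
    (hV : ∀ ω, 0 ≤ V ω) {C α : ℝ} (hα : 0 < α)
    (htail : ∀ t > 0, μ.real {ω | V ω ≤ t} ≤ exp (-C * t ^ (-α))) (hl : 0 < l) :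
    mgf V μ (-l) ≤ 2 * exp (-min C 1 * l ^ (α / (1 + α))) := by
  set s := l ^ (α / (1 + α))
  -- `t = l^{-1/(1+α)}` balances the two terms: `t^{-α} = l t = s`.
  set t := l ^ (-(1 + α)⁻¹)
  have hs : 0 ≤ s := rpow_nonneg hl.le _
  have hlt : l * t = s := by
    calc l * t = l ^ (1 + -(1 + α)⁻¹) := by rw [rpow_add hl, rpow_one]
      _ = s := by congr 1; field_simp; ring
  have htα : t ^ (-α) = s := by
    rw [← rpow_mul hl.le]
    congr 1
    field_simp
  calc mgf V μ (-l) ≤ μ.real {ω | V ω ≤ t} + exp (-l * t) :=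
        mgf_neg_le_measureReal_add_exp hVm hV hl.le t
    _ ≤ exp (-C * s) + exp (-s) := by
        rw [neg_mul, hlt, ← htα]
        gcongr
        exact htail t (rpow_pos_of_pos hl _)
    _ ≤ exp (-min C 1 * s) + exp (-min C 1 * s) := by
        gcongr
        · exact min_le_left C 1
        · nlinarith [min_le_right C 1]
    _ = 2 * exp (-min C 1 * s) := by ring

end ProbabilityTheory

lemma exists_pos_le_neg_mul_of_le_sub_mul {a c ε : ℝ} (ha : 0 < a) (hc : 0 < c) (hε : 0 < ε) :
    ∃ C > 0, ∀ s y : ℝ, y ≤ a - c * s → y ≤ -ε → y ≤ -C * s := by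
  -- Beyond `s = 2a / c` the first bound gives `y ≤ -c s / 2`; below it, `-ε` does the job.
  refine ⟨min (c / 2) (ε * c / (2 * a)), by positivity, fun s y hlarge hsmall ↦ ?_⟩
  rcases le_or_gt (2 * a) (c * s) with hs | hs
  · have hs₀ : 0 ≤ s := nonneg_of_mul_nonneg_right (by linarith) hc
    nlinarith [mul_le_mul_of_nonneg_right (min_le_left (c / 2) (ε * c / (2 * a))) hs₀]
  · rcases le_or_gt s 0 with hs₀ | hs₀
    · have hC : 0 ≤ min (c / 2) (ε * c / (2 * a)) := by positivity
      nlinarith [mul_nonpos_of_nonneg_of_nonpos hC hs₀]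
    · have : ε * c / (2 * a) * s ≤ ε := by
        rw [div_mul_eq_mul_div, div_le_iff₀ (by positivity)]
        nlinarith
      nlinarith [mul_le_mul_of_nonneg_right (min_le_right (c / 2) (ε * c / (2 * a))) hs₀.le]

/-- If `log P(V ≤ t) ≤ -C₁ t^{-α}` for all `t > 0`, then
`log E[e^{-λV}] ≤ -C₂ λ^{α/(1+α)}` for all `λ > 1`. -/
theorem log_laplace_of_log_tail {Ω : Type*} [MeasurableSpace Ω] (μ : Measure Ω)
    [IsProbabilityMeasure μ] (V : Ω → ℝ) (hVm : Measurable V) (hV : ∀ ω, 0 < V ω)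
    (α : ℝ) (hα : 0 < α)
    (h : ∃ C₁ > 0, ∀ t > 0, Real.log (μ {ω | V ω ≤ t}).toReal ≤ -C₁ * t ^ (-α)) :
    ∃ C₂ > 0, ∀ l > 1, Real.log (∫ ω, Real.exp (-l * V ω) ∂μ) ≤
      -C₂ * l ^ (α / (1 + α)) := by
  obtain ⟨C₁, hC₁, hlog⟩ := h
  have hV₀ : ∀ ω, 0 ≤ V ω := fun ω ↦ (hV ω).le
  have hmgf_pos : ∀ l ≥ 0, 0 < mgf V μ (-l) := fun l hl ↦
    mgf_pos (integrable_exp_neg_mul hVm hV₀ hl)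
  have hcgf_one : 0 < -cgf V μ (-1) :=
    neg_pos.2 (log_neg (hmgf_pos 1 zero_le_one) (mgf_neg_lt_one hVm hV one_pos))
  obtain ⟨C₂, hC₂, hC⟩ :=
    exists_pos_le_neg_mul_of_le_sub_mul (log_pos one_lt_two) (lt_min hC₁ one_pos) hcgf_one
  refine ⟨C₂, hC₂, fun l hl ↦ hC _ (cgf V μ (-l)) ?_ ?_⟩
  · calc cgf V μ (-l) ≤ log (2 * exp (-min C₁ 1 * l ^ (α / (1 + α)))) :=
          log_le_log (hmgf_pos l (by linarith)) <| mgf_neg_le_two_mul_exp_rpow hVm hV₀ hα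
            (fun t ht ↦ le_exp_of_log_le (hlog t ht)) (by linarith)
      _ = log 2 - min C₁ 1 * l ^ (α / (1 + α)) := by
          rw [log_mul two_ne_zero (exp_ne_zero _), log_exp]
          ring
  · rw [neg_neg]
    exact log_le_log (hmgf_pos l (by linarith))
      (mgf_neg_le_mgf_neg_of_le hVm hV₀ zero_le_one hl.le)
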